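/- Let β be a real number with |β| < 1, let S be the shift operator on l²(ℤ, ℂ), and for ν ∈ ℝ with 2ν ∉ ℤ and T ∈ ℕ let g_{ν,T}(t) = e^{2πiνt}/√(2T+1) for −T ≤ t ≤ T and 0 otherwise. Then lim_{T→∞} Σ_{t∈ℤ} ((I − βS)^{−1} g_{ν,T})(t) · ((I − βS)^{−1} g_{ν,T})(t) = 0 (the bilinear sum without complex conjugation). -/

import Mathlib

/-
Expanding both factors, `∑ₜ h(t)² = ∑_{j,k} β^{j+k} ∑ₜ g(t+j) g(t+k)` with `h = (I - βS)⁻¹ g`.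
For `g = g_{ν,T}` each inner sum is `(2T+1)⁻¹ z^{j+k}` times a geometric sum of `(z²)^t`,
`z = e^{2πiν}`, over an interval, hence at most `(2T+1)⁻¹ · 2 / |z² - 1|` uniformly in `j, k`;
`z² ≠ 1` is exactly `2ν ∉ ℤ`. So the whole sum is `O(1/T)`.
-/

open Filter

/-- The normalized complex wave `g_{ν,T}` of frequency `ν` on the window `[-T, T]`:
`g_{ν,T} t = e^{2πiνt} / √(2T+1)` for `-T ≤ t ≤ T` and `0` otherwise. -/
noncomputable def waveWindow (ν : ℝ) (T : ℕ) : ℤ → ℂ :=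
  fun t => if -(T : ℤ) ≤ t ∧ t ≤ (T : ℤ)
    then Complex.exp (2 * Real.pi * Complex.I * (ν : ℂ) * (t : ℂ)) / (Real.sqrt (2 * T + 1) : ℂ)
    else 0

/-- The von Neumann inverse `(I - βS)⁻¹ = ∑_{j ≥ 0} (βS)^j` applied to a complex
sequence `g`, where `S` is the shift `(S g) t = g (t + 1)`. -/
noncomputable def vonNeumannInvC (β : ℝ) (g : ℤ → ℂ) : ℤ → ℂ :=
  fun t => ∑' j : ℕ, (β : ℂ) ^ j * g (t + j)

open Complex

section GeometricSums

variable {𝕜 : Type*} [NormedDivisionRing 𝕜]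

lemma norm_geom_sum_le_of_norm_le_one {w : 𝕜} (hw : ‖w‖ ≤ 1) (hw1 : w ≠ 1) (n : ℕ) :
    ‖∑ i ∈ Finset.range n, w ^ i‖ ≤ 2 / ‖w - 1‖ := by
  rw [geom_sum_eq hw1, norm_div]
  gcongr
  calc ‖w ^ n - 1‖ ≤ ‖w‖ ^ n + ‖(1 : 𝕜)‖ := by rw [← norm_pow]; exact norm_sub_le _ _
    _ ≤ 2 := by rw [norm_one]; linarith [pow_le_one₀ (norm_nonneg w) hw (n := n)]

lemma norm_sum_Icc_zpow_le {w : 𝕜} (hw : ‖w‖ = 1) (hw1 : w ≠ 1) (a b : ℤ) :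
    ‖∑ t ∈ Finset.Icc a b, w ^ t‖ ≤ 2 / ‖w - 1‖ := by
  have hw0 : w ≠ 0 := by rintro rfl; simp at hw
  have hshift : ∑ t ∈ Finset.Icc a b, w ^ t
      = w ^ a * ∑ i ∈ Finset.range (b + 1 - a).toNat, w ^ i := by
    simp only [Int.Icc_eq_finset_map, Finset.sum_map, Function.Embedding.trans_apply,
      Nat.castEmbedding_apply, addLeftEmbedding_apply, zpow_add₀ hw0, zpow_natCast,
      Finset.mul_sum]
  rw [hshift, norm_mul, norm_zpow, hw, one_zpow, one_mul]
  exact norm_geom_sum_le_of_norm_le_one hw.le hw1 _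

end GeometricSums

lemma tsum_indicator_Icc {α M : Type*} [Preorder α] [LocallyFiniteOrder α] [AddCommMonoid M]
    [TopologicalSpace M] (a b : α) (f : α → M) :
    ∑' t, (Set.Icc a b).indicator f t = ∑ t ∈ Finset.Icc a b, f t := by
  rw [← tsum_subtype, ← Finset.coe_Icc]
  exact Finset.tsum_subtype' _ _

lemma summable_norm_indicator_Icc {α E : Type*} [Preorder α] [LocallyFiniteOrder α]
    [SeminormedAddCommGroup E] (a b : α) (f : α → E) :
    Summable fun t => ‖(Set.Icc a b).indicator f t‖ :=
  summable_of_ne_finset_zero (s := Finset.Icc a b) fun t ht => by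
    rw [Set.indicator_of_notMem (by simpa using ht), norm_zero]

section WindowedExponential

variable {z : ℂ} (c : ℂ) (m n : ℤ)

lemma indicator_zpow_shift_mul (hz : z ≠ 0) (d e t : ℤ) :
    (Set.Icc m n).indicator (fun s => c * z ^ s) (t + d)
        * (Set.Icc m n).indicator (fun s => c * z ^ s) (t + e)
      = (Set.Icc (max (m - d) (m - e)) (min (n - d) (n - e))).indicator
          (fun s => c ^ 2 * z ^ (d + e) * (z ^ 2) ^ s) t := by
  have hsq : (z ^ 2) ^ t = z ^ t * z ^ t := by rw [sq, mul_zpow]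
  simp only [Set.indicator_apply, Set.mem_Icc, max_le_iff, le_min_iff]
  split_ifs
  · rw [hsq, zpow_add₀ hz, zpow_add₀ hz, zpow_add₀ hz]
    ring
  all_goals first | omega | simp only [zero_mul, mul_zero]

lemma norm_tsum_indicator_zpow_shift_mul_le (hz : ‖z‖ = 1) (hz2 : z ^ 2 ≠ 1) (d e : ℤ) :
    ‖∑' t, (Set.Icc m n).indicator (fun s => c * z ^ s) (t + d)
        * (Set.Icc m n).indicator (fun s => c * z ^ s) (t + e)‖ ≤ ‖c‖ ^ 2 * (2 / ‖z ^ 2 - 1‖) := by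
  have hz0 : z ≠ 0 := by rintro rfl; simp at hz
  simp_rw [indicator_zpow_shift_mul c m n hz0]
  rw [tsum_indicator_Icc, ← Finset.mul_sum, norm_mul, norm_mul,
    norm_pow, norm_zpow, hz, one_zpow, mul_one]
  gcongr
  exact norm_sum_Icc_zpow_le (by rw [norm_pow, hz, one_pow]) hz2 _ _

end WindowedExponential

lemma norm_le_tsum_norm {ι E : Type*} [SeminormedAddCommGroup E] {f : ι → E}
    (hf : Summable (‖f ·‖)) (i : ι) : ‖f i‖ ≤ ∑' j, ‖f j‖ :=
  hf.le_tsum i fun _ _ => norm_nonneg _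

section ShiftSeries

variable {𝕜 : Type*} [NormedField 𝕜] {a : ℕ → 𝕜} {g : ℤ → 𝕜}

/-- `∑ⱼ aⱼ Sʲ g`, so that `vonNeumannInvC β = shiftSeries (β ^ ·)`. -/
noncomputable def shiftSeries (a : ℕ → 𝕜) (g : ℤ → 𝕜) (t : ℤ) : 𝕜 :=
  ∑' j : ℕ, a j * g (t + j)

lemma summable_norm_mul_norm_shift (ha : Summable (‖a ·‖)) (hg : Summable (‖g ·‖)) :
    Summable fun p : ℕ × ℤ => ‖a p.1‖ * ‖g (p.2 + p.1)‖ :=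
  (Equiv.prodShear (Equiv.refl ℕ) fun j => Equiv.addRight (j : ℤ)).summable_iff.mpr
    (ha.mul_of_nonneg hg (fun _ => norm_nonneg _) fun _ => norm_nonneg _)

lemma summable_norm_mul_shift (ha : Summable (‖a ·‖)) (hg : Summable (‖g ·‖)) (t : ℤ) :
    Summable fun j : ℕ => ‖a j * g (t + j)‖ :=
  (ha.mul_right (∑' s, ‖g s‖)).of_nonneg_of_le (fun _ => norm_nonneg _) fun j =>
    (norm_mul_le _ _).trans (by gcongr; exact norm_le_tsum_norm hg _)

variable [CompleteSpace 𝕜]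

lemma summable_shift_mul_shift (ha : Summable (‖a ·‖)) (hg : Summable (‖g ·‖)) :
    Summable (Function.uncurry fun (t : ℤ) (p : ℕ × ℕ) =>
      a p.1 * g (t + p.1) * (a p.2 * g (t + p.2))) := by
  let e : ℤ × (ℕ × ℕ) ≃ (ℕ × ℤ) × ℕ :=
    (Equiv.prodAssoc ℤ ℕ ℕ).symm.trans ((Equiv.prodComm ℤ ℕ).prodCongr (Equiv.refl ℕ))
  have hbound := (summable_norm_mul_norm_shift ha hg).mul_of_nonneg
    (ha.mul_right (∑' s, ‖g s‖)) (fun _ => by positivity) fun _ => by positivity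
  refine (e.summable_iff.mpr hbound).of_norm_bounded fun q => ?_
  simp only [Function.comp_apply, e, Equiv.trans_apply, Equiv.prodAssoc_symm_apply,
    Equiv.prodCongr_apply, Equiv.prodComm_apply, Prod.swap, Prod.map, Equiv.refl_apply]
  refine (norm_mul_le _ _).trans (mul_le_mul ?_ ?_ (norm_nonneg _) (by positivity))
  · exact norm_mul_le _ _
  · exact (norm_mul_le _ _).trans (by gcongr; exact norm_le_tsum_norm hg _)

lemma tsum_shiftSeries_mul_self (ha : Summable (‖a ·‖)) (hg : Summable (‖g ·‖)) :
    ∑' t : ℤ, shiftSeries a g t * shiftSeries a g t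
      = ∑' p : ℕ × ℕ, a p.1 * a p.2 * ∑' t : ℤ, g (t + p.1) * g (t + p.2) := by
  calc _ = ∑' t : ℤ, ∑' p : ℕ × ℕ, a p.1 * g (t + p.1) * (a p.2 * g (t + p.2)) :=
        tsum_congr fun t => tsum_mul_tsum_of_summable_norm (summable_norm_mul_shift ha hg t)
          (summable_norm_mul_shift ha hg t)
    _ = ∑' p : ℕ × ℕ, ∑' t : ℤ, a p.1 * g (t + p.1) * (a p.2 * g (t + p.2)) :=
        (summable_shift_mul_shift ha hg).tsum_comm.symm
    _ = _ := tsum_congr fun p => by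
        rw [← tsum_mul_left]
        exact tsum_congr fun t => by ring

lemma norm_tsum_shiftSeries_mul_self_le (ha : Summable (‖a ·‖)) (hg : Summable (‖g ·‖)) {B : ℝ}
    (hB : ∀ j k : ℕ, ‖∑' t : ℤ, g (t + j) * g (t + k)‖ ≤ B) :
    ‖∑' t : ℤ, shiftSeries a g t * shiftSeries a g t‖ ≤ (∑' j, ‖a j‖) ^ 2 * B := by
  have hprod := ha.mul_of_nonneg ha (fun _ => norm_nonneg _) fun _ => norm_nonneg _
  have hsum : HasSum (fun p : ℕ × ℕ => ‖a p.1‖ * ‖a p.2‖ * B) ((∑' j, ‖a j‖) ^ 2 * B) := by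
    rw [sq, ha.tsum_mul_tsum ha hprod]
    exact hprod.hasSum.mul_right B
  rw [tsum_shiftSeries_mul_self ha hg]
  refine tsum_of_norm_bounded hsum fun p => (norm_mul_le _ _).trans ?_
  gcongr
  · exact norm_mul_le _ _
  · exact hB _ _

end ShiftSeries

lemma waveWindow_eq_indicator (ν : ℝ) (T : ℕ) :
    waveWindow ν T = (Set.Icc (-(T : ℤ)) T).indicator
      fun t => ((Real.sqrt (2 * T + 1) : ℝ) : ℂ)⁻¹ * exp (2 * Real.pi * I * ν) ^ t := by
  ext t
  simp only [waveWindow, Set.indicator_apply, Set.mem_Icc, ← exp_int_mul]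
  split_ifs
  · rw [div_eq_inv_mul]
    ring_nf
  · rfl

lemma norm_exp_two_pi_I_mul (ν : ℝ) : ‖exp (2 * Real.pi * I * ν)‖ = 1 := by
  rw [show 2 * Real.pi * I * ν = ((2 * Real.pi * ν : ℝ) : ℂ) * I by push_cast; ring,
    norm_exp_ofReal_mul_I]

lemma exp_two_pi_I_mul_sq_ne_one {ν : ℝ} (hν : ∀ m : ℤ, 2 * ν ≠ m) :
    exp (2 * Real.pi * I * ν) ^ 2 ≠ 1 := by
  rw [← exp_nat_mul, Ne, exp_eq_one_iff]
  rintro ⟨m, hm⟩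
  refine hν m (Complex.ofReal_injective ?_)
  have h2πI : 2 * Real.pi * I ≠ 0 := by simp [Real.pi_ne_zero, I_ne_zero]
  have hm' : 2 * Real.pi * I * (2 * ν) = 2 * Real.pi * I * m := by
    push_cast at hm
    linear_combination hm
  push_cast
  exact mul_left_cancel₀ h2πI hm'

lemma norm_inv_sqrt_sq {x : ℝ} (hx : 0 ≤ x) : ‖((Real.sqrt x : ℝ) : ℂ)⁻¹‖ ^ 2 = x⁻¹ := by
  rw [norm_inv, norm_real, Real.norm_of_nonneg (Real.sqrt_nonneg _), inv_pow, Real.sq_sqrt hx]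

/-- For `|β| < 1` and `ν ∈ ℝ` with `2ν ∉ ℤ`, the bilinear sum
without complex conjugation vanishes in the limit:
`∑_t ((I - βS)⁻¹ g_{ν,T}) t ⬝ ((I - βS)⁻¹ g_{ν,T}) t → 0` as `T → ∞`. -/
theorem stmt_16 (β : ℝ) (hβ : |β| < 1) (ν : ℝ) (hν : ∀ m : ℤ, 2 * ν ≠ (m : ℝ)) :
    Tendsto (fun T : ℕ =>
        ∑' t : ℤ, vonNeumannInvC β (waveWindow ν T) t * vonNeumannInvC β (waveWindow ν T) t)
      atTop (nhds (0 : ℂ)) := by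
  set z := exp (2 * Real.pi * I * ν)
  have hβ_summable : Summable fun j : ℕ => ‖(β : ℂ) ^ j‖ := by
    simpa only [norm_pow, norm_real, Real.norm_eq_abs]
      using summable_geometric_of_lt_one (abs_nonneg β) hβ
  have hbound : ∀ T : ℕ,
      ‖∑' t : ℤ, vonNeumannInvC β (waveWindow ν T) t * vonNeumannInvC β (waveWindow ν T) t‖
        ≤ (∑' j : ℕ, ‖(β : ℂ) ^ j‖) ^ 2 * (2 / ‖z ^ 2 - 1‖) * (2 * (T : ℝ) + 1)⁻¹ := fun T => by
    have hT : (0 : ℝ) ≤ 2 * T + 1 := by positivity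
    rw [waveWindow_eq_indicator]
    refine (norm_tsum_shiftSeries_mul_self_le hβ_summable (summable_norm_indicator_Icc _ _ _)
      fun j k => norm_tsum_indicator_zpow_shift_mul_le _ _ _ (norm_exp_two_pi_I_mul ν)
        (exp_two_pi_I_mul_sq_ne_one hν) j k).trans_eq ?_
    rw [norm_inv_sqrt_sq hT]
    ring
  refine squeeze_zero_norm hbound ?_
  simpa using ((tendsto_inv_atTop_zero.comp (tendsto_atTop_add_const_right _ 1
    ((tendsto_natCast_atTop_atTop (R := ℝ)).const_mul_atTop two_pos))).const_mul _)
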